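/- arXiv:1907.12038 — 2 statements merged into one kernel-verified Lean document; each statement's English description precedes it below -/
import Mathlib

section
/- The function s ↦ s / I(s) is increasing on (0, 1/2), where I(s) = (1/√(2π)) e^{-Φ^{-1}(s)²/2} is the Gaussian isoperimetric function and Φ is the Gaussian tail function. -/
open MeasureTheory

/-- The Gaussian tail function `Φ(t) = (2π)^{-1/2} ∫_t^∞ e^{-τ²/2} dτ`. -/
noncomputable def Phi (t : ℝ) : ℝ :=
  (Real.sqrt (2 * Real.pi))⁻¹ * ∫ τ in Set.Ioi t, Real.exp (-τ^2/2)

/-! With `t = Φ⁻¹(s)`, the quotient `s / I(s)` is the Mills ratio `R(t) = Φ(t) / φ(t)` of the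
standard Gaussian. The substitution `τ = t + u` gives `R(t) = ∫₀^∞ e^{-tu - u²/2} du`, which is
strictly decreasing in `t`; since `Φ⁻¹` is decreasing, `s ↦ R(Φ⁻¹(s))` is strictly increasing. -/

open Real Set

theorem setIntegral_Ioi_zero_comp_add_right {E : Type*} [NormedAddCommGroup E] [NormedSpace ℝ E]
    (f : ℝ → E) (t : ℝ) :
    ∫ u in Ioi 0, f (u + t) = ∫ x in Ioi t, f x := by
  rw [← (measurePreserving_add_right volume t).setIntegral_preimage_emb
    (measurableEmbedding_addRight t) f (Ioi t), preimage_add_const_Ioi, sub_self]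

theorem integrable_exp_neg_sq_div_two : Integrable fun x : ℝ ↦ exp (-x ^ 2 / 2) := by
  convert integrable_exp_neg_mul_sq (b := 1 / 2) (by norm_num) using 2 with x
  ring_nf

theorem exp_neg_mul_sub_sq_div_two (t u : ℝ) :
    exp (-(t * u) - u ^ 2 / 2) = exp (t ^ 2 / 2) * exp (-(u + t) ^ 2 / 2) := by
  rw [← exp_add]; ring_nf

theorem integrable_exp_neg_mul_sub_sq_div_two (t : ℝ) :
    Integrable fun u : ℝ ↦ exp (-(t * u) - u ^ 2 / 2) := by
  simp_rw [exp_neg_mul_sub_sq_div_two t]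
  exact (integrable_exp_neg_sq_div_two.comp_add_right t).const_mul _

noncomputable def millsRatio (t : ℝ) : ℝ :=
  Phi t / ((√(2 * π))⁻¹ * exp (-t ^ 2 / 2))

theorem millsRatio_eq_integral (t : ℝ) :
    millsRatio t = ∫ u in Ioi 0, exp (-(t * u) - u ^ 2 / 2) := by
  have hc : (√(2 * π))⁻¹ ≠ 0 := by positivity
  rw [millsRatio, Phi, mul_div_mul_left _ _ hc, ← setIntegral_Ioi_zero_comp_add_right,
    div_eq_mul_inv, ← exp_neg, neg_div, neg_neg, ← integral_mul_const]
  simp_rw [exp_neg_mul_sub_sq_div_two t, mul_comm]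

theorem millsRatio_strictAnti : StrictAnti millsRatio := by
  intro t₁ t₂ ht
  simp only [millsRatio_eq_integral]
  rw [← sub_pos, ← integral_sub (integrable_exp_neg_mul_sub_sq_div_two t₁).integrableOn
    (integrable_exp_neg_mul_sub_sq_div_two t₂).integrableOn]
  have hlt : ∀ u ∈ Ioi (0 : ℝ), exp (-(t₂ * u) - u ^ 2 / 2) < exp (-(t₁ * u) - u ^ 2 / 2) :=
    fun u hu ↦ exp_lt_exp.2 (by nlinarith [mem_Ioi.1 hu])
  rw [setIntegral_pos_iff_support_of_nonneg_ae]
  · exact (by simp : (0 : ENNReal) < volume (Ioi (0 : ℝ))).trans_le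
      (measure_mono fun u hu ↦ ⟨(sub_pos.2 (hlt u hu)).ne', hu⟩)
  · filter_upwards [ae_restrict_mem measurableSet_Ioi] with u hu
    exact (sub_pos.2 (hlt u hu)).le
  · exact ((integrable_exp_neg_mul_sub_sq_div_two t₁).sub
      (integrable_exp_neg_mul_sub_sq_div_two t₂)).integrableOn

theorem antitone_Phi : Antitone Phi := fun t₁ t₂ ht ↦
  mul_le_mul_of_nonneg_left (setIntegral_mono_set integrable_exp_neg_sq_div_two.integrableOn
    (.of_forall fun _ ↦ (exp_pos _).le) (Ioi_subset_Ioi ht).eventuallyLE) (by positivity)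

theorem s_div_I_strictMono_general
    (Phinv : ℝ → ℝ)
    (hPhinv : ∀ s ∈ Set.Ioo (0:ℝ) 1, Phi (Phinv s) = s)
    (I : ℝ → ℝ)
    (hI : ∀ s ∈ Set.Ioo (0:ℝ) 1,
      I s = (Real.sqrt (2 * Real.pi))⁻¹ * Real.exp (-(Phinv s)^2/2)) :
    StrictMonoOn (fun s => s / I s) (Set.Ioo (0:ℝ) (1/2)) := by
  have hsub : Ioo (0 : ℝ) (1 / 2) ⊆ Ioo 0 1 := Ioo_subset_Ioo_right (by norm_num)
  have hmills : ∀ s ∈ Ioo (0 : ℝ) 1, s / I s = millsRatio (Phinv s) := fun s hs ↦ by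
    rw [millsRatio, hPhinv s hs, hI s hs]
  intro s₁ hs₁ s₂ hs₂ hs
  have hPhinv_lt : Phinv s₂ < Phinv s₁ :=
    antitone_Phi.reflect_lt (by rwa [hPhinv s₁ (hsub hs₁), hPhinv s₂ (hsub hs₂)])
  simpa only [hmills s₁ (hsub hs₁), hmills s₂ (hsub hs₂)] using millsRatio_strictAnti hPhinv_lt

theorem s_div_I_strictMono
    (Phinv : ℝ → ℝ)
    (hPhinv : ∀ s ∈ Set.Ioo (0:ℝ) 1, Phi (Phinv s) = s)
    (hPhinv' : ∀ t : ℝ, Phinv (Phi t) = t)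
    (I : ℝ → ℝ)
    (hI : ∀ s ∈ Set.Ioo (0:ℝ) 1,
      I s = (Real.sqrt (2 * Real.pi))⁻¹ * Real.exp (-(Phinv s)^2/2)) :
    StrictMonoOn (fun s => s / I s) (Set.Ioo (0:ℝ) (1/2)) :=
  s_div_I_strictMono_general Phinv hPhinv I hI
end

section
/- For every β > 0, e^{t²/2} ∫_t^∞ (τ²/2)^{1/β} e^{-τ²/2} dτ is asymptotically equivalent to 2^{-1/β} t^{2/β - 1} as t → ∞; that is, the ratio of the two quantities tends to 1. -/
/-!
For `t > 0` the integrand is `2^(-1/β) τ^(p+1) e^(-τ²/2)` with `p = 2/β - 1`, so the claim is the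
tail asymptotics `∫_t^∞ τ^(p+1) e^(-bτ²) dτ ~ t^p e^(-bt²) / (2b)`.
Both sides tend to `0`, and by L'Hôpital's rule the ratio of their derivatives,
`t^(p+1) / (t^(p-1) (2bt² - p))`, tends to `1 / (2b)`.
-/

open MeasureTheory Filter Set Real Topology

theorem hasDerivAt_integral_Ioi {E : Type*} [NormedAddCommGroup E] [NormedSpace ℝ E]
    [CompleteSpace E] {f : ℝ → E} {a t : ℝ} (hf : IntegrableOn f (Ioi a))
    (hcont : ContinuousOn f (Ioi a)) (ht : a < t) :
    HasDerivAt (fun u => ∫ x in Ioi u, f x) (-f t) t := by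
  have hright : HasDerivAt (fun u => ∫ x in a..u, f x) (f t) t :=
    intervalIntegral.integral_hasDerivAt_right
      ((intervalIntegrable_iff_integrableOn_Ioc_of_le ht.le).2 (hf.mono_set Ioc_subset_Ioi_self))
      (hcont.stronglyMeasurableAtFilter isOpen_Ioi t ht)
      (hcont.continuousAt (Ioi_mem_nhds ht))
  refine (hright.const_sub (∫ x in Ioi a, f x)).congr_of_eventuallyEq ?_
  filter_upwards [Ioi_mem_nhds ht] with u hu
  rw [← intervalIntegral.integral_Ioi_sub_Ioi hf (le_of_lt hu), sub_sub_cancel]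

theorem integrableOn_Ioi_rpow_mul_exp_neg_mul_sq {a b : ℝ} (ha : 0 < a) (hb : 0 < b) (s : ℝ) :
    IntegrableOn (fun x : ℝ => x ^ s * exp (-b * x ^ 2)) (Ioi a) :=
  integrable_of_isBigO_exp_neg one_half_pos
    (fun x hx => ((continuousAt_rpow_const x s (Or.inl (by linarith [mem_Ici.mp hx]))).mul
      (by fun_prop)).continuousWithinAt)
    (rpow_mul_exp_neg_mul_sq_isLittleO_exp_neg hb s).isBigO

theorem hasDerivAt_rpow_mul_exp_neg_mul_sq {x : ℝ} (hx : 0 < x) (b p : ℝ) :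
    HasDerivAt (fun t => t ^ p * exp (-b * t ^ 2))
      (x ^ (p - 1) * exp (-b * x ^ 2) * (p - 2 * b * x ^ 2)) x := by
  have h : HasDerivAt (fun t => t ^ p * exp (-b * t ^ 2)) _ x :=
    (hasDerivAt_rpow_const (p := p) (Or.inl hx.ne')).mul
    (((hasDerivAt_pow 2 x).const_mul (-b)).exp)
  convert h using 1
  rw [show x ^ p = x ^ (p - 1) * x by rw [← rpow_add_one hx.ne', sub_add_cancel]]
  push_cast
  ring

theorem tendsto_rpow_mul_exp_neg_mul_sq_atTop_nhds_zero {b : ℝ} (hb : 0 < b) (p : ℝ) :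
    Tendsto (fun t : ℝ => t ^ p * exp (-b * t ^ 2)) atTop (𝓝 0) :=
  (rpow_mul_exp_neg_mul_sq_isLittleO_exp_neg hb p).isBigO.trans_tendsto <|
    tendsto_exp_atBot.comp <| tendsto_id.const_mul_atTop_of_neg (by norm_num)

theorem tendsto_integral_Ioi_rpow_mul_exp_neg_mul_sq_div {b : ℝ} (hb : 0 < b) (p : ℝ) :
    Tendsto (fun t => (∫ x in Ioi t, x ^ (p + 1) * exp (-b * x ^ 2)) /
      (t ^ p * exp (-b * t ^ 2))) atTop (𝓝 (2 * b)⁻¹) := by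
  have hcont : ContinuousOn (fun x : ℝ => x ^ (p + 1) * exp (-b * x ^ 2)) (Ioi 1) :=
    fun x hx => ((continuousAt_rpow_const x _ (Or.inl (one_pos.trans hx).ne')).mul
      (by fun_prop)).continuousWithinAt
  have hlarge : ∀ᶠ t : ℝ in atTop, 0 < t ∧ p < 2 * b * t ^ 2 :=
    (eventually_gt_atTop 0).and <|
      ((tendsto_pow_atTop two_ne_zero).const_mul_atTop (by positivity)).eventually_gt_atTop p
  refine HasDerivAt.lhopital_zero_atTop (f' := fun t => -(t ^ (p + 1) * exp (-b * t ^ 2)))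
    (g' := fun t => t ^ (p - 1) * exp (-b * t ^ 2) * (p - 2 * b * t ^ 2)) ?_ ?_ ?_
    (tendsto_integral_Ioi_zero tendsto_id) (tendsto_rpow_mul_exp_neg_mul_sq_atTop_nhds_zero hb p) ?_
  · filter_upwards [eventually_gt_atTop 1] with t ht
    exact hasDerivAt_integral_Ioi (integrableOn_Ioi_rpow_mul_exp_neg_mul_sq one_pos hb _) hcont ht
  · filter_upwards [hlarge] with t ⟨ht, _⟩
    exact hasDerivAt_rpow_mul_exp_neg_mul_sq ht b p
  · filter_upwards [hlarge] with t ⟨ht, htp⟩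
    have : p - 2 * b * t ^ 2 ≠ 0 := by linarith
    positivity
  · have hlim : Tendsto (fun t : ℝ => (2 * b - p / t ^ 2)⁻¹) atTop (𝓝 (2 * b)⁻¹) := by
      simpa using ((tendsto_const_nhds (x := p)).div_atTop
        (tendsto_pow_atTop two_ne_zero)).const_sub (2 * b) |>.inv₀ (by simp [hb.ne'])
    refine hlim.congr' ?_
    filter_upwards [hlarge] with t ⟨ht, htp⟩
    rw [show t ^ (p + 1) = t ^ (p - 1) * t ^ 2 by
      rw [← rpow_two, ← rpow_add ht]; ring_nf]
    have h1 : p - 2 * b * t ^ 2 ≠ 0 := by linarith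
    have h2 : 2 * b * t ^ 2 - p ≠ 0 := by linarith
    field_simp
    ring

theorem sq_div_two_rpow {x : ℝ} (hx : 0 ≤ x) (r : ℝ) :
    (x ^ 2 / 2) ^ r = 2 ^ (-r) * x ^ (2 * r) := by
  rw [div_eq_mul_inv, mul_rpow (sq_nonneg x) (by norm_num), inv_rpow zero_le_two,
    ← rpow_neg zero_le_two, ← rpow_natCast, ← rpow_mul hx, Nat.cast_ofNat, mul_comm]

theorem gaussian_exponential_integral_asymptotic_general (β : ℝ) :
    Tendsto (fun t =>
      (Real.exp (t^2/2) * ∫ τ in Set.Ioi t, (τ^2/2) ^ (1/β) * Real.exp (-τ^2/2))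
        / ((2:ℝ) ^ (-1/β) * t ^ (2/β - 1))) atTop (nhds 1) := by
  have hlim := tendsto_integral_Ioi_rpow_mul_exp_neg_mul_sq_div one_half_pos (2 / β - 1)
  rw [show (2 * (1 / 2) : ℝ)⁻¹ = 1 by norm_num] at hlim
  refine hlim.congr' ?_
  filter_upwards [eventually_gt_atTop 0] with t ht
  have hint : ∫ τ in Ioi t, (τ ^ 2 / 2) ^ (1 / β) * exp (-τ ^ 2 / 2) =
      2 ^ (-1 / β) * ∫ τ in Ioi t, τ ^ (2 / β - 1 + 1) * exp (-(1 / 2) * τ ^ 2) := by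
    rw [← integral_const_mul]
    refine setIntegral_congr_fun measurableSet_Ioi fun τ hτ => ?_
    rw [sq_div_two_rpow (ht.trans hτ).le]
    ring_nf
  rw [hint, show -(1 / 2) * t ^ 2 = -(t ^ 2 / 2) by ring, exp_neg]
  field_simp

theorem gaussian_exponential_integral_asymptotic (β : ℝ) (hβ : 0 < β) :
    Tendsto (fun t =>
      (Real.exp (t^2/2) * ∫ τ in Set.Ioi t, (τ^2/2) ^ (1/β) * Real.exp (-τ^2/2))
        / ((2:ℝ) ^ (-1/β) * t ^ (2/β - 1))) atTop (nhds 1) :=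
  gaussian_exponential_integral_asymptotic_general β
end
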